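/- If θ is an inner function, then the orthogonal projection of the subspace θ̄H² of L² onto H²₋ equals θ̄·K_θ, which moreover equals z̄·\overline{K_{θ}} (the set of functions e^{-it}·\overline{g(e^{it})} with g ∈ K_θ). -/

import Mathlib

open MeasureTheory Complex Real
open scoped ComplexConjugate ENNReal

noncomputable section

namespace SS

abbrev T : ℝ := 2 * Real.pi

instance : Fact (0 < T) := ⟨by positivity⟩

/-- Normalized Haar (Lebesgue) measure on the circle. -/
abbrev μ : Measure (AddCircle T) := AddCircle.haarAddCircle

/-- The space `L²` of the circle. -/
abbrev L2 := Lp ℂ 2 μ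

/-- The Hardy space `H²`: the closed span of the nonnegative Fourier modes. -/
def H2 : Submodule ℂ L2 :=
  (Submodule.span ℂ {f : L2 | ∃ n : ℕ, f = fourierLp 2 (n : ℤ)}).topologicalClosure

instance : CompleteSpace H2 :=
  (Submodule.isClosed_topologicalClosure _).completeSpace_coe

/-- `H²₋ = L² ⊖ H²`. -/
def H2m : Submodule ℂ L2 := H2ᗮ

instance : CompleteSpace H2m :=
  (Submodule.isClosed_orthogonal H2).completeSpace_coe

/-- Orthogonal projection `P₊` of `L²` onto `H²`, seen as an operator on `L²`. -/
def Pplus : L2 →ₗ[ℂ] L2 := H2.subtype.comp (H2.orthogonalProjectionOnto).toLinearMap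

/-- Orthogonal projection `P₋` of `L²` onto `H²₋`, seen as an operator on `L²`. -/
def Pminus : L2 →ₗ[ℂ] L2 := H2m.subtype.comp (H2m.orthogonalProjectionOnto).toLinearMap

theorem memL2_mul_of_bound {φ : AddCircle T → ℂ} (hm : AEStronglyMeasurable φ μ)
    {C : ℝ} (hb : ∀ᵐ t ∂μ, ‖φ t‖ ≤ C) (f : L2) :
    MemLp (fun t => φ t * (f : AddCircle T → ℂ) t) 2 μ := by
  have h1 : MemLp φ ∞ μ := memLp_top_of_bound hm C hb
  exact (Lp.memLp f).mul' (r := 2) h1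

/-- Multiplication by a bounded measurable function, as an operator on `L²`. -/
def mulOp (φ : AddCircle T → ℂ) (hm : AEStronglyMeasurable φ μ)
    {C : ℝ} (hb : ∀ᵐ t ∂μ, ‖φ t‖ ≤ C) : L2 →ₗ[ℂ] L2 where
  toFun f := (memL2_mul_of_bound hm hb f).toLp _
  map_add' f g := by
    apply Lp.ext
    filter_upwards [MemLp.coeFn_toLp (memL2_mul_of_bound hm hb (f + g)),
      MemLp.coeFn_toLp (memL2_mul_of_bound hm hb f),
      MemLp.coeFn_toLp (memL2_mul_of_bound hm hb g),
      Lp.coeFn_add ((memL2_mul_of_bound hm hb f).toLp _)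
        ((memL2_mul_of_bound hm hb g).toLp _),
      Lp.coeFn_add f g] with t h1 h2 h3 h4 h5
    simp only [h1, h4, Pi.add_apply, h2, h3, h5]
    ring
  map_smul' c f := by
    apply Lp.ext
    filter_upwards [MemLp.coeFn_toLp (memL2_mul_of_bound hm hb (c • f)),
      MemLp.coeFn_toLp (memL2_mul_of_bound hm hb f),
      Lp.coeFn_smul c ((memL2_mul_of_bound hm hb f).toLp _),
      Lp.coeFn_smul c f] with t h1 h2 h3 h4
    simp only [RingHom.id_apply, h1, h3, Pi.smul_apply, h2, h4, smul_eq_mul]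
    ring

/-- The function `e^{it}` on the circle. -/
def φz : AddCircle T → ℂ := fun t => fourier 1 t

theorem φz_meas : AEStronglyMeasurable φz μ := (fourier 1).continuous.aestronglyMeasurable

theorem φz_bound : ∀ᵐ t ∂μ, ‖φz t‖ ≤ 1 :=
  Filter.Eventually.of_forall fun t => le_of_eq (Circle.norm_coe _)

/-- Multiplication by `z = e^{it}` on `L²`. -/
def Mz : L2 →ₗ[ℂ] L2 := mulOp φz φz_meas φz_bound

/-- The operator `S ⊕ S₊` on `L² = H² ⊕ H²₋` (internal orthogonal decomposition):
it acts as `Mz` on the `H²`-component and as `P₋ Mz` on the `H²₋`-component. -/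
def D : L2 →ₗ[ℂ] L2 := Mz.comp Pplus + (Pminus.comp (Mz.comp Pminus))

/-- The set `φ·M ⊆ L²`, for a function `φ` on the circle and a set `M ⊆ L²`,
defined via a.e. representatives. -/
def mulSet (φ : AddCircle T → ℂ) (M : Set L2) : Set L2 :=
  {g | ∃ f ∈ M, ⇑g =ᵐ[μ] fun t => φ t * f t}

/-- The model space `K_θ = H² ⊖ θH²`, as a subset of `L²`. -/
def Kset (θ : AddCircle T → ℂ) : Set L2 :=
  {f | f ∈ H2 ∧ ∀ g ∈ mulSet θ (H2 : Set L2), inner (𝕜 := ℂ) g f = 0}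

/-- `θ` is (the boundary function of) an inner function: it is measurable, its negative
Fourier coefficients vanish (i.e. it belongs to `H²`, hence to `H^∞`), and it has
unimodular boundary values a.e. -/
structure IsInner (θ : AddCircle T → ℂ) : Prop where
  meas : AEStronglyMeasurable θ μ
  coeff : ∀ n : ℤ, n < 0 → fourierCoeff θ n = 0
  unimod : ∀ᵐ t ∂μ, ‖θ t‖ = 1

/-- `φ` is (the boundary function of) an element of the closed unit ball of `H^∞`. -/
structure MemBallHinf (φ : AddCircle T → ℂ) : Prop where
  meas : AEStronglyMeasurable φ μ
  coeff : ∀ n : ℤ, n < 0 → fourierCoeff φ n = 0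
  bound : ∀ᵐ t ∂μ, ‖φ t‖ ≤ 1

theorem IsInner.memBall {θ : AddCircle T → ℂ} (h : IsInner θ) : MemBallHinf θ :=
  ⟨h.meas, h.coeff, h.unimod.mono fun _ ht => le_of_eq ht⟩

theorem aeNeg {g g' : AddCircle T → ℂ} (h : g =ᵐ[μ] g') :
    (fun t => g (-t)) =ᵐ[μ] fun t => g' (-t) :=
  (Measure.measurePreserving_neg μ).quasiMeasurePreserving.ae_eq_comp h

theorem memL2_J (f : L2) :
    MemLp (fun t => (fourier (-1) t : ℂ) * (f : L2) (-t)) 2 μ := by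
  have h1 : MemLp (fun t : AddCircle T => (f : L2) (-t)) 2 μ :=
    (Lp.memLp f).comp_measurePreserving (Measure.measurePreserving_neg μ)
  have h2 : MemLp (fun t : AddCircle T => (fourier (-1) t : ℂ)) ∞ μ :=
    memLp_top_of_bound (fourier (-1)).continuous.aestronglyMeasurable 1
      (Filter.Eventually.of_forall fun _ => le_of_eq (Circle.norm_coe _))
  exact h1.mul' (r := 2) h2

/-- The operator `J` on `L²`: `(Jf)(e^{it}) = e^{-it} f(e^{-it})`. -/
def Jop : L2 →ₗ[ℂ] L2 where
  toFun f := (memL2_J f).toLp _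
  map_add' f g := by
    apply Lp.ext
    filter_upwards [MemLp.coeFn_toLp (memL2_J (f + g)), MemLp.coeFn_toLp (memL2_J f),
      MemLp.coeFn_toLp (memL2_J g),
      Lp.coeFn_add ((memL2_J f).toLp _) ((memL2_J g).toLp _),
      aeNeg (Lp.coeFn_add f g)] with t h1 h2 h3 h4 h5
    simp only [h1, h4, Pi.add_apply, h2, h3, h5]
    ring
  map_smul' c f := by
    apply Lp.ext
    filter_upwards [MemLp.coeFn_toLp (memL2_J (c • f)), MemLp.coeFn_toLp (memL2_J f),
      Lp.coeFn_smul c ((memL2_J f).toLp _),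
      aeNeg (Lp.coeFn_smul c f)] with t h1 h2 h3 h4
    simp only [RingHom.id_apply, h1, h3, Pi.smul_apply, h2, h4, smul_eq_mul]
    ring

/-- The subspace `Y = {(θ₂₁u₁+θ₂₂u₂) ⊕ P₋(conj θ₁₁ u₁ + conj θ₁₂ u₂) : u₁,u₂ ∈ H²}`
inside `L² = H² ⊕ H²₋` (internal orthogonal decomposition). -/
def YSet (θ11 θ12 θ21 θ22 : AddCircle T → ℂ) : Set L2 :=
  {y | ∃ u1 ∈ (H2 : Set L2), ∃ u2 ∈ (H2 : Set L2), ∃ g h : L2, g ∈ H2 ∧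
    (⇑g =ᵐ[μ] fun t => θ21 t * u1 t + θ22 t * u2 t) ∧
    (⇑h =ᵐ[μ] fun t => (starRingEnd ℂ) (θ11 t) * u1 t + (starRingEnd ℂ) (θ12 t) * u2 t) ∧
    y = g + Pminus h}

/-- `g` is (the boundary function of) an outer function:
`log |g(0)| = ∫ log |g| dm`, where `g(0)` is the 0-th Fourier coefficient. -/
structure IsOuter (g : AddCircle T → ℂ) : Prop where
  meas : AEStronglyMeasurable g μ
  coeff : ∀ n : ℤ, n < 0 → fourierCoeff g n = 0
  ne_zero : ¬ g =ᵐ[μ] 0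
  outer : Real.log ‖fourierCoeff g 0‖ = ∫ t, Real.log ‖g t‖ ∂μ


/-! ### Auxiliary lemmas -/

local notation "⟪" x ", " y "⟫" => @inner ℂ _ _ x y

lemma inner_L2 (f g : L2) : ⟪f, g⟫ = ∫ t, conj (f t) * g t ∂μ := by
  rw [MeasureTheory.L2.inner_def]
  simp [RCLike.inner_apply]
  exact integral_congr_ae (Filter.Eventually.of_forall fun t => mul_comm _ _)

lemma fourierCoeff_congr {f g : AddCircle T → ℂ} (h : f =ᵐ[μ] g) (n : ℤ) :
    fourierCoeff f n = fourierCoeff g n := by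
  refine integral_congr_ae ?_
  filter_upwards [h] with t ht
  rw [ht]

lemma fourierCoeff_coe (f : L2) (n : ℤ) :
    fourierCoeff (⇑f) n = ⟪(fourierLp 2 n : L2), f⟫ := by
  rw [← fourierBasis_repr, HilbertBasis.repr_apply_apply, coe_fourierBasis]

lemma isClosed_H2 : IsClosed (H2 : Set L2) := Submodule.isClosed_topologicalClosure _

lemma fourierLp_mem_H2 (k : ℕ) : (fourierLp 2 (k : ℤ) : L2) ∈ H2 :=
  Submodule.le_topologicalClosure _ (Submodule.subset_span ⟨k, rfl⟩)

/-- If `⟪w, e_k⟫ = 0` for all `k ≥ 0` then `⟪w, f⟫ = 0` for all `f ∈ H2`. -/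
lemma inner_H2_eq_zero {w : L2} (hw : ∀ k : ℕ, ⟪w, (fourierLp 2 (k : ℤ) : L2)⟫ = 0)
    {f : L2} (hf : f ∈ H2) : ⟪w, f⟫ = 0 := by
  have : H2 ≤ (ℂ ∙ w)ᗮ := by
    unfold H2
    refine Submodule.topologicalClosure_minimal _ ?_ (Submodule.isClosed_orthogonal _)
    rw [Submodule.span_le]
    rintro g ⟨k, rfl⟩
    rw [SetLike.mem_coe, Submodule.mem_orthogonal_singleton_iff_inner_right]
    exact hw k
  have := this hf
  rw [Submodule.mem_orthogonal_singleton_iff_inner_right] at this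
  exact this

lemma mem_H2_iff {f : L2} :
    f ∈ H2 ↔ ∀ n : ℤ, n < 0 → fourierCoeff (⇑f) n = 0 := by
  constructor
  · intro hf n hn
    rw [fourierCoeff_coe]
    refine inner_H2_eq_zero (fun k => ?_) hf
    have := fourierBasis (T := T) |>.orthonormal
    rw [← coe_fourierBasis]
    exact this.2 (by omega)
  · intro h
    have hs := (fourierBasis (T := T)).hasSum_repr f
    refine isClosed_H2.mem_of_tendsto hs (Filter.Eventually.of_forall fun s => ?_)
    refine Submodule.sum_mem _ fun i _ => ?_
    rcases lt_or_ge i 0 with hi | hi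
    · have : fourierBasis.repr f i = 0 := by
        rw [fourierBasis_repr]; exact h i hi
      rw [this, zero_smul]; exact H2.zero_mem
    · refine H2.smul_mem _ ?_
      have : (fourierBasis (T := T)) i = fourierLp 2 i := by rw [coe_fourierBasis]
      rw [this]
      have := fourierLp_mem_H2 i.toNat
      rwa [Int.toNat_of_nonneg hi] at this

lemma mulOp_coeFn {φ : AddCircle T → ℂ} (hm : AEStronglyMeasurable φ μ)
    {C : ℝ} (hb : ∀ᵐ t ∂μ, ‖φ t‖ ≤ C) (f : L2) :
    ⇑(mulOp φ hm hb f) =ᵐ[μ] fun t => φ t * f t := MemLp.coeFn_toLp (memL2_mul_of_bound hm hb f)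

lemma mulOp_norm_le {φ : AddCircle T → ℂ} (hm : AEStronglyMeasurable φ μ)
    (hb : ∀ᵐ t ∂μ, ‖φ t‖ ≤ 1) (f : L2) :
    ‖mulOp φ hm hb f‖ ≤ ‖f‖ := by
  show ‖(memL2_mul_of_bound hm hb f).toLp _‖ ≤ ‖f‖
  rw [Lp.norm_toLp, Lp.norm_def]
  refine ENNReal.toReal_mono (Lp.eLpNorm_ne_top f) (eLpNorm_mono_ae ?_)
  filter_upwards [hb] with t hbt
  calc ‖φ t * (f : AddCircle T → ℂ) t‖ = ‖φ t‖ * ‖f t‖ := norm_mul _ _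
    _ ≤ 1 * ‖f t‖ := by gcongr
    _ = ‖f t‖ := one_mul _

lemma mulOp_norm_eq {φ : AddCircle T → ℂ} (hm : AEStronglyMeasurable φ μ)
    (hb : ∀ᵐ t ∂μ, ‖φ t‖ ≤ 1) (hu : ∀ᵐ t ∂μ, ‖φ t‖ = 1) (f : L2) :
    ‖mulOp φ hm hb f‖ = ‖f‖ := by
  show ‖(memL2_mul_of_bound hm hb f).toLp _‖ = ‖f‖
  rw [Lp.norm_toLp, Lp.norm_def]
  congr 1
  refine eLpNorm_congr_norm_ae ?_
  filter_upwards [hu] with t hut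
  rw [norm_mul, hut, one_mul]

lemma fourierCoeff_mul_fourier (φ : AddCircle T → ℂ) (k n : ℤ) :
    fourierCoeff (fun t => φ t * fourier k t) n = fourierCoeff φ (n - k) := by
  unfold fourierCoeff
  refine integral_congr_ae (Filter.Eventually.of_forall fun t => ?_)
  simp only [smul_eq_mul]
  rw [show -(n - k) = -n + k by ring, fourier_add]
  ring

/-- multiplication by a ball-H^infty function preserves `H2`. -/
lemma mulOp_mem_H2 {φ : AddCircle T → ℂ} (hφ : MemBallHinf φ) {f : L2} (hf : f ∈ H2) :
    mulOp φ hφ.meas hφ.bound f ∈ H2 := by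
  set M : L2 →ₗ[ℂ] L2 := mulOp φ hφ.meas hφ.bound with hM
  have hcont : Continuous M := by
    refine AddMonoidHomClass.continuous_of_bound M 1 fun g => ?_
    rw [one_mul]
    exact mulOp_norm_le hφ.meas hφ.bound g
  have hK : H2 ≤ Submodule.comap M H2 := by
    unfold H2
    refine Submodule.topologicalClosure_minimal _ ?_ ?_
    · rw [Submodule.span_le]
      rintro g ⟨k, rfl⟩
      rw [SetLike.mem_coe, Submodule.mem_comap]
      show (mulOp φ hφ.meas hφ.bound) (fourierLp 2 (k : ℤ)) ∈ H2
      rw [mem_H2_iff]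
      intro n hn
      have h1 : ⇑(mulOp φ hφ.meas hφ.bound (fourierLp 2 (k : ℤ)))
          =ᵐ[μ] fun t => φ t * fourier (k : ℤ) t := by
        filter_upwards [mulOp_coeFn hφ.meas hφ.bound (fourierLp 2 (k : ℤ)),
          coeFn_fourierLp 2 (k : ℤ)] with t ht1 ht2
        rw [ht1, ht2]
      rw [fourierCoeff_congr h1 n, fourierCoeff_mul_fourier]
      exact hφ.coeff _ (by omega)
    · exact IsClosed.preimage hcont isClosed_H2
  exact hK hf

lemma inner_mulOp_left {φ : AddCircle T → ℂ} (hm : AEStronglyMeasurable φ μ)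
    {C : ℝ} (hb : ∀ᵐ t ∂μ, ‖φ t‖ ≤ C)
    (hm' : AEStronglyMeasurable (fun t => conj (φ t)) μ)
    (hb' : ∀ᵐ t ∂μ, ‖conj (φ t)‖ ≤ C) (f g : L2) :
    ⟪(mulOp φ hm hb f : L2), g⟫ = ⟪f, (mulOp (fun t => conj (φ t)) hm' hb' g : L2)⟫ := by
  rw [inner_L2, inner_L2]
  refine integral_congr_ae ?_
  filter_upwards [mulOp_coeFn hm hb f, mulOp_coeFn hm' hb' g] with t h1 h2
  rw [h1, h2]
  simp only [map_mul]
  ring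

section InnerTheta

variable {θ : AddCircle T → ℂ}

/-- Multiplication by `θ`. -/
def Mth (hθ : IsInner θ) : L2 →ₗ[ℂ] L2 := mulOp θ hθ.meas hθ.memBall.bound

lemma conj_meas (hθ : IsInner θ) :
    AEStronglyMeasurable (fun t => conj (θ t)) μ :=
  (RCLike.continuous_conj (K := ℂ)).comp_aestronglyMeasurable hθ.meas

lemma conj_bound (hθ : IsInner θ) : ∀ᵐ t ∂μ, ‖conj (θ t)‖ ≤ 1 := by
  filter_upwards [hθ.unimod] with t ht
  rw [RCLike.norm_conj, ht]

/-- Multiplication by `conj θ`. -/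
def Mthb (hθ : IsInner θ) : L2 →ₗ[ℂ] L2 :=
  mulOp (fun t => conj (θ t)) (conj_meas hθ) (conj_bound hθ)

/-- Multiplication by `θ` as a linear isometry. -/
def MthIso (hθ : IsInner θ) : L2 →ₗᵢ[ℂ] L2 :=
  ⟨Mth hθ, fun f => mulOp_norm_eq hθ.meas hθ.memBall.bound hθ.unimod f⟩

/-- The subspace `θ H²`. -/
def Sth (hθ : IsInner θ) : Submodule ℂ L2 := H2.map (MthIso hθ).toLinearMap

lemma completeSpace_Sth (hθ : IsInner θ) : CompleteSpace (Sth hθ) :=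
  LinearIsometry.completeSpace_map (MthIso hθ) H2

lemma Mth_coeFn (hθ : IsInner θ) (f : L2) :
    ⇑(Mth hθ f) =ᵐ[μ] fun t => θ t * f t :=
  mulOp_coeFn hθ.meas hθ.memBall.bound f

lemma Mthb_coeFn (hθ : IsInner θ) (f : L2) :
    ⇑(Mthb hθ f) =ᵐ[μ] fun t => conj (θ t) * f t :=
  mulOp_coeFn (conj_meas hθ) (conj_bound hθ) f

lemma Sth_le_H2 (hθ : IsInner θ) : Sth hθ ≤ H2 := by
  rintro g ⟨u, hu, rfl⟩
  exact mulOp_mem_H2 hθ.memBall hu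

lemma mulSet_theta_eq (hθ : IsInner θ) :
    mulSet θ (H2 : Set L2) = (Sth hθ : Set L2) := by
  ext g
  constructor
  · rintro ⟨f, hf, hae⟩
    refine ⟨f, hf, ?_⟩
    refine (Lp.ext (hae.trans (Mth_coeFn hθ f).symm)).symm
  · rintro ⟨u, hu, rfl⟩
    exact ⟨u, hu, Mth_coeFn hθ u⟩

lemma mem_Kset_iff (hθ : IsInner θ) {f : L2} :
    f ∈ Kset θ ↔ f ∈ H2 ∧ f ∈ (Sth hθ)ᗮ := by
  unfold Kset
  rw [Set.mem_setOf_eq, mulSet_theta_eq hθ]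
  constructor
  · rintro ⟨h1, h2⟩
    exact ⟨h1, Submodule.mem_orthogonal _ _ |>.2 fun v hv => h2 v hv⟩
  · rintro ⟨h1, h2⟩
    exact ⟨h1, fun v hv => (Submodule.mem_orthogonal _ _).1 h2 v hv⟩

lemma Mthb_Mth (hθ : IsInner θ) (f : L2) : Mthb hθ (Mth hθ f) = f := by
  apply Lp.ext
  filter_upwards [Mthb_coeFn hθ (Mth hθ f), Mth_coeFn hθ f, hθ.unimod] with t h1 h2 ht
  rw [h1, h2]
  have : conj (θ t) * θ t = 1 := by
    rw [mul_comm, Complex.mul_conj]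
    norm_cast
    rw [Complex.normSq_eq_norm_sq, ht, one_pow]
  rw [← mul_assoc, this, one_mul]

lemma inner_Mth_left (hθ : IsInner θ) (f g : L2) :
    ⟪(Mth hθ f : L2), g⟫ = ⟪f, (Mthb hθ g : L2)⟫ :=
  inner_mulOp_left hθ.meas hθ.memBall.bound (conj_meas hθ) (conj_bound hθ) f g

lemma Mthb_mem_H2m (hθ : IsInner θ) {k : L2} (hk : k ∈ (Sth hθ)ᗮ) :
    Mthb hθ k ∈ H2m := by
  rw [H2m, Submodule.mem_orthogonal]
  intro u hu
  rw [← inner_Mth_left hθ]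
  exact (Submodule.mem_orthogonal _ _).1 hk _ ⟨u, hu, rfl⟩

lemma Pminus_eq_self {w : L2} (hw : w ∈ H2m) : Pminus w = w := by
  show (H2m.orthogonalProjectionOnto w : L2) = w
  exact Submodule.starProjection_eq_self_iff.2 hw

lemma Pminus_eq_zero {u : L2} (hu : u ∈ H2) : Pminus u = 0 := by
  show (H2m.orthogonalProjectionOnto u : L2) = 0
  rw [Submodule.orthogonalProjectionOnto_apply_of_mem_orthogonal]
  · rfl
  · exact H2.le_orthogonal_orthogonal hu

end InnerTheta

lemma conj_mul_self_one {z : ℂ} (h : ‖z‖ = 1) : conj z * z = 1 := by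
  rw [mul_comm, Complex.mul_conj]
  norm_cast
  rw [Complex.normSq_eq_norm_sq, h, one_pow]

lemma memL2_conj (f : L2) : MemLp (fun t => conj (f t)) 2 μ := by
  refine ⟨(RCLike.continuous_conj (K := ℂ)).comp_aestronglyMeasurable
    (Lp.aestronglyMeasurable f), ?_⟩
  rw [eLpNorm_congr_norm_ae (g := ⇑f)
    (Filter.Eventually.of_forall fun t => RCLike.norm_conj _)]
  exact Lp.eLpNorm_lt_top f

/-- pointwise conjugation on `L²`. -/
def conjL2 (f : L2) : L2 := (memL2_conj f).toLp _

lemma conjL2_coeFn (f : L2) : ⇑(conjL2 f) =ᵐ[μ] fun t => conj (f t) :=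
  MemLp.coeFn_toLp (memL2_conj f)

section Conjugation

variable {θ : AddCircle T → ℂ}

lemma phiC_meas (hθ : IsInner θ) :
    AEStronglyMeasurable (fun t : AddCircle T => (fourier (-1) t : ℂ) * θ t) μ :=
  ((fourier (-1)).continuous.aestronglyMeasurable).mul hθ.meas

lemma phiC_bound (hθ : IsInner θ) :
    ∀ᵐ t ∂μ, ‖(fourier (-1) t : ℂ) * θ t‖ ≤ 1 := by
  filter_upwards [hθ.unimod] with t ht
  rw [norm_mul, ht, mul_one]
  exact le_of_eq (Circle.norm_coe _)

/-- The conjugation `C f = z̄ θ conj f` on `K_θ`. -/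
def Cop (hθ : IsInner θ) (f : L2) : L2 :=
  mulOp (fun t : AddCircle T => (fourier (-1) t : ℂ) * θ t) (phiC_meas hθ) (phiC_bound hθ)
    (conjL2 f)

lemma Cop_coeFn (hθ : IsInner θ) (f : L2) :
    ⇑(Cop hθ f) =ᵐ[μ] fun t => (fourier (-1) t : ℂ) * θ t * conj (f t) := by
  filter_upwards [mulOp_coeFn (phiC_meas hθ) (phiC_bound hθ) (conjL2 f),
    conjL2_coeFn f] with t h1 h2
  rw [Cop, h1, h2]

lemma Cop_mem_Kset (hθ : IsInner θ) {f : L2} (hf : f ∈ Kset θ) : Cop hθ f ∈ Kset θ := by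
  obtain ⟨hfH2, hforth⟩ := (mem_Kset_iff hθ).1 hf
  rw [mem_Kset_iff hθ]
  constructor
  · -- Cop f ∈ H2
    rw [mem_H2_iff]
    intro n hn
    set m : ℕ := (-(n + 1)).toNat with hm
    have hmz : (m : ℤ) = -(n + 1) := Int.toNat_of_nonneg (by omega)
    have key : fourierCoeff (⇑(Cop hθ f)) n = conj ⟪(Mth hθ (fourierLp 2 (m : ℤ)) : L2), f⟫ := by
      rw [inner_L2, ← integral_conj]
      unfold fourierCoeff
      refine integral_congr_ae ?_
      filter_upwards [Cop_coeFn hθ f, Mth_coeFn hθ (fourierLp 2 (m : ℤ)),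
        coeFn_fourierLp 2 (m : ℤ)] with t h1 h2 h3
      rw [h1, map_mul, starRingEnd_self_apply, h2, h3, smul_eq_mul]
      have h4 : (fourier (-n) t : ℂ) * fourier (-1) t = fourier (m : ℤ) t := by
        rw [show (m : ℤ) = -n + -1 from by omega, fourier_add]
      calc (fourier (-n) t : ℂ) * ((fourier (-1) t : ℂ) * θ t * conj ((f : AddCircle T → ℂ) t))
          = ((fourier (-n) t : ℂ) * fourier (-1) t) * θ t * conj ((f : AddCircle T → ℂ) t) := by
            ring
        _ = θ t * fourier (m : ℤ) t * conj ((f : AddCircle T → ℂ) t) := by rw [h4]; ring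
    rw [key]
    have : (Mth hθ (fourierLp 2 (m : ℤ)) : L2) ∈ Sth hθ := ⟨_, fourierLp_mem_H2 m, rfl⟩
    rw [(Submodule.mem_orthogonal _ _).1 hforth _ this, map_zero]
  · -- Cop f ⊥ Sth
    rw [Submodule.mem_orthogonal]
    rintro x ⟨u, hu, rfl⟩
    show ⟪(Mth hθ u : L2), Cop hθ f⟫ = 0
    have hwinner : ∀ k : ℕ,
        ⟪(conjL2 (mulOp φz φz_meas φz_bound u) : L2), (fourierLp 2 (k : ℤ) : L2)⟫ = 0 := by
      intro k
      have : ⟪(conjL2 (mulOp φz φz_meas φz_bound u) : L2), (fourierLp 2 (k : ℤ) : L2)⟫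
          = fourierCoeff (⇑u) (-(k + 1)) := by
        rw [inner_L2]
        unfold fourierCoeff
        refine integral_congr_ae ?_
        filter_upwards [conjL2_coeFn (mulOp φz φz_meas φz_bound u),
          mulOp_coeFn φz_meas φz_bound u, coeFn_fourierLp 2 (k : ℤ)] with t h1 h2 h3
        rw [h1, h2, h3, smul_eq_mul, starRingEnd_self_apply]
        rw [show -(-((k : ℤ) + 1)) = (k : ℤ) + 1 by ring, fourier_add, φz]
        push_cast
        ring
      rw [this]
      exact mem_H2_iff.1 hu _ (by omega)
    have hwf : ⟪(conjL2 (mulOp φz φz_meas φz_bound u) : L2), f⟫ = 0 :=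
      inner_H2_eq_zero hwinner hfH2
    have key : ⟪(Mth hθ u : L2), Cop hθ f⟫
        = conj ⟪(conjL2 (mulOp φz φz_meas φz_bound u) : L2), f⟫ := by
      rw [inner_L2, inner_L2, ← integral_conj]
      refine integral_congr_ae ?_
      filter_upwards [Mth_coeFn hθ u, Cop_coeFn hθ f, hθ.unimod,
        conjL2_coeFn (mulOp φz φz_meas φz_bound u),
        mulOp_coeFn φz_meas φz_bound u] with t h1 h2 ht h3 h4
      rw [h1, h2, h3, h4]
      simp only [map_mul, starRingEnd_self_apply, φz, fourier_neg]
      have h5 := conj_mul_self_one ht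
      linear_combination (conj ((u : AddCircle T → ℂ) t) * conj ((fourier 1 t : ℂ)) *
        conj ((f : AddCircle T → ℂ) t)) * h5
    rw [key, hwf, map_zero]

end Conjugation

lemma zbar_mul_z (t : AddCircle T) : (fourier (-1) t : ℂ) * fourier 1 t = 1 := by
  rw [← fourier_add]
  norm_num [fourier_zero]

lemma conj_zbar (t : AddCircle T) : conj (fourier (-1) t : ℂ) = fourier 1 t := by
  have := fourier_neg (n := (-1 : ℤ)) (x := t) (T := T)
  rw [neg_neg] at this
  exact this.symm

/-- for `θ` inner, `P₋(θ̄H²) = θ̄·K_θ = z̄·conj(K_θ)`. -/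
theorem stmt3_proj_conj_theta_H2 (θ : AddCircle T → ℂ) (hθ : IsInner θ) :
    ⇑Pminus '' mulSet (fun t => (starRingEnd ℂ) (θ t)) (H2 : Set L2)
        = mulSet (fun t => (starRingEnd ℂ) (θ t)) (Kset θ) ∧
    mulSet (fun t => (starRingEnd ℂ) (θ t)) (Kset θ)
        = {g : L2 | ∃ f ∈ Kset θ,
            ⇑g =ᵐ[μ] fun t => (fourier (-1) t : ℂ) * (starRingEnd ℂ) (f t)} := by
  haveI := completeSpace_Sth hθ
  constructor
  · -- Part 1
    ext g
    constructor
    · rintro ⟨x, ⟨h, hh, hae⟩, rfl⟩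
      have hx : x = Mthb hθ h := Lp.ext (hae.trans (Mthb_coeFn hθ h).symm)
      set v : L2 := ↑((Sth hθ).orthogonalProjectionOnto h) with hv
      have hvmem : v ∈ Sth hθ := Submodule.coe_mem _
      obtain ⟨u, hu, huv⟩ := hvmem
      have hvmem' : v ∈ Sth hθ := Submodule.coe_mem _
      have hk0 : h - v ∈ (Sth hθ)ᗮ := Submodule.sub_starProjection_mem_orthogonal (K := Sth hθ) h
      have hkH2 : h - v ∈ H2 := H2.sub_mem hh (Sth_le_H2 hθ hvmem')
      have hkK : h - v ∈ Kset θ := (mem_Kset_iff hθ).2 ⟨hkH2, hk0⟩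
      refine ⟨h - v, hkK, ?_⟩
      have e1 : Mthb hθ v = u := by rw [← huv]; exact Mthb_Mth hθ u
      have hMk : Mthb hθ (h - v) ∈ H2m := Mthb_mem_H2m hθ hk0
      have e2 : Pminus x = Mthb hθ (h - v) := by
        have hsum : Mthb hθ h = u + Mthb hθ (h - v) := by
          have hd : h = v + (h - v) := by abel
          calc Mthb hθ h = Mthb hθ (v + (h - v)) := by rw [← hd]
            _ = Mthb hθ v + Mthb hθ (h - v) := map_add _ _ _
            _ = u + Mthb hθ (h - v) := by rw [e1]
        rw [hx, hsum, map_add, Pminus_eq_zero hu, zero_add, Pminus_eq_self hMk]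
      rw [e2]
      exact Mthb_coeFn hθ (h - v)
    · rintro ⟨k, hk, hae⟩
      have hkm := (mem_Kset_iff hθ).1 hk
      have hg : g = Mthb hθ k := Lp.ext (hae.trans (Mthb_coeFn hθ k).symm)
      have hmem : Mthb hθ k ∈ H2m := Mthb_mem_H2m hθ hkm.2
      refine ⟨Mthb hθ k, ⟨k, hkm.1, Mthb_coeFn hθ k⟩, ?_⟩
      rw [Pminus_eq_self hmem, hg]
  · -- Part 2
    ext g
    simp only [Set.mem_setOf_eq]
    constructor
    · rintro ⟨k, hk, hae⟩
      refine ⟨Cop hθ k, Cop_mem_Kset hθ hk, ?_⟩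
      filter_upwards [hae, Cop_coeFn hθ k] with t h1 h2
      rw [h1, h2]
      simp only [map_mul, starRingEnd_self_apply]
      rw [conj_zbar t]
      linear_combination (-(conj (θ t)) * (k : AddCircle T → ℂ) t) * (zbar_mul_z t)
    · rintro ⟨f0, hf0, hae⟩
      refine ⟨Cop hθ f0, Cop_mem_Kset hθ hf0, ?_⟩
      filter_upwards [hae, Cop_coeFn hθ f0, hθ.unimod] with t h1 h2 ht
      rw [h1, h2]
      have h5 := conj_mul_self_one ht
      linear_combination (-(fourier (-1) t : ℂ) * conj ((f0 : AddCircle T → ℂ) t)) * h5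

end SS
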